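/- Let G₁ and G₂ be finitely generated groups with the same finite quotients, i.e. for every finite group Q there is a surjective homomorphism G₁ → Q if and only if there is a surjective homomorphism G₂ → Q. Then the profinite completions Ĝ₁ and Ĝ₂ are isomorphic as topological groups. -/

import Mathlib

universe u v

namespace ProfinitePaper

variable (G : Type u) [Group G]

/-- The finite-index normal subgroups of `G`, indexing the finite quotients. -/
abbrev FinNormal : Type u := {N : Subgroup G // N.Normal ∧ N.FiniteIndex}

variable {G} in
instance (N : FinNormal G) : N.1.Normal := N.2.1

variable {G} in
instance (N : FinNormal G) : N.1.FiniteIndex := N.2.2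

/-- Each finite quotient carries the discrete topology. -/
instance (N : FinNormal G) : TopologicalSpace (G ⧸ N.1) := ⊥

instance (N : FinNormal G) : DiscreteTopology (G ⧸ N.1) := ⟨rfl⟩

instance (N : FinNormal G) : IsTopologicalGroup (G ⧸ N.1) where
  continuous_mul := continuous_of_discreteTopology
  continuous_inv := continuous_of_discreteTopology

/-- The profinite completion of `G`, as the inverse limit (compatible families)
inside the product of all finite quotients of `G`. -/
def profiniteCompletionSubgroup : Subgroup (∀ N : FinNormal G, G ⧸ N.1) where
  carrier := {x | ∀ (N M : FinNormal G) (h : N.1 ≤ M.1),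
    QuotientGroup.map N.1 M.1 (MonoidHom.id G) (fun _ hx => h hx) (x N) = x M}
  one_mem' := fun N M h => by simp
  mul_mem' := fun {x y} hx hy N M h => by
    simp only [Pi.mul_apply, map_mul, hx N M h, hy N M h]
  inv_mem' := fun {x} hx N M h => by
    simp only [Pi.inv_apply, map_inv, hx N M h]

/-- The profinite completion `Ĝ` of `G`, regarded as a topological group: it is the
inverse limit of the discrete finite quotients `G/N`, a compact, Hausdorff, totally
disconnected topological group (with the subspace topology from the product of the
discrete finite quotients). -/
abbrev ProfiniteCompletion : Type u := profiniteCompletionSubgroup G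

/-- The canonical homomorphism `ι : G → Ĝ`, induced by the quotient maps `G → G/N`. -/
def iota : G →* ProfiniteCompletion G :=
  MonoidHom.codRestrict (Pi.monoidHom fun N : FinNormal G => QuotientGroup.mk' N.1)
    (profiniteCompletionSubgroup G)
    (fun g N M h => by first | rfl | exact QuotientGroup.map_mk _ _ _ _ _)

/-!
For a finitely generated group `G`, let `K_n(G)` (`boundedIndexCore G n`) be the intersection of
the normal subgroups of index at most `n`. There are only finitely many of these, since each is the
kernel of a homomorphism `G → Sym(n)`; so `G ⧸ K_n(G)` is finite, and the `K_n(G)` are cofinal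
among the finite-index normal subgroups, i.e. `Ĝ = lim G ⧸ K_n(G)`.

If `G₁` and `G₂` have the same finite quotients, there is a surjection `G₁ → G₂ ⧸ K_n(G₂)`; it
kills `K_n(G₁)`, because a surjection maps `K_n` into `K_n` and `K_n(G₂ ⧸ K_n(G₂)) = 1`. Running
the argument the other way shows `|G₁ ⧸ K_n(G₁)| ≤ |G₂ ⧸ K_n(G₂)|`, so the induced map is an
isomorphism.
The sets of such surjections are finite and nonempty and form an inverse system, so by König's lemma
they can be chosen compatibly in `n`; the resulting compatible isomorphisms of the levels assemble
to an isomorphism `Ĝ₁ ≃ Ĝ₂`, which is continuous in both directions since every coordinate factors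
through a discrete level.
-/

open Function

variable {G}

/-- The transition map `G ⧸ N → G ⧸ M`, in the form used by `profiniteCompletionSubgroup`, whose
compatibility condition thus reads `quotientProj h (x N) = x M`. -/
def quotientProj {N M : Subgroup G} [N.Normal] [M.Normal] (h : N ≤ M) : G ⧸ N →* G ⧸ M :=
  QuotientGroup.map N M (MonoidHom.id G) fun _ hx => h hx

section QuotientProj

variable {N M L : Subgroup G} [N.Normal] [M.Normal] [L.Normal]

lemma quotientProj_surjective (h : N ≤ M) : Surjective (quotientProj h) :=
  QuotientGroup.map_surjective_of_surjective _ _ (MonoidHom.id G) QuotientGroup.mk_surjective _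

@[simp]
lemma quotientProj_refl (x : G ⧸ N) : quotientProj le_rfl x = x := by
  induction x using QuotientGroup.induction_on with | H g => rfl

@[simp]
lemma quotientProj_quotientProj (h₁ : N ≤ M) (h₂ : M ≤ L) (x : G ⧸ N) :
    quotientProj h₂ (quotientProj h₁ x) = quotientProj (h₁.trans h₂) x := by
  induction x using QuotientGroup.induction_on with | H g => rfl

end QuotientProj

instance finite_monoidHom_of_fg [Group.FG G] (M : Type*) [Group M] [Finite M] :
    Finite (G →* M) := by
  obtain ⟨S, hS, hSfin⟩ := Group.fg_iff.mp ‹Group.FG G›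
  have : Finite S := hSfin.to_subtype
  exact Finite.of_injective (fun f : G →* M => fun s : S => f s)
    fun f g hfg => MonoidHom.eq_of_eqOn_dense hS fun s hs => congrFun hfg ⟨s, hs⟩

instance finite_finNormal_index_le [Group.FG G] (n : ℕ) :
    Finite {N : FinNormal G // N.1.index ≤ n} := by
  have hker (N : {N : FinNormal G // N.1.index ≤ n}) :
      N.1.1 ∈ Set.range (MonoidHom.ker : (G →* Equiv.Perm (Fin n)) → Subgroup G) := by
    have hcard : Nat.card (G ⧸ N.1.1) ≤ n := N.1.1.index_eq_card ▸ N.2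
    let ι : G ⧸ N.1.1 ↪ Fin n := (Finite.equivFin _).toEmbedding.trans (Fin.castLEEmb hcard)
    refine ⟨(Equiv.Perm.viaEmbeddingHom ι).comp (MulAction.toPermHom G (G ⧸ N.1.1)), ?_⟩
    rw [MonoidHom.ker_comp_of_injective _ _ (Equiv.Perm.viaEmbeddingHom_injective ι),
      ← Subgroup.normalCore_eq_ker, Subgroup.normalCore_eq_self]
  exact Finite.of_injective (fun N => (⟨N.1.1, hker N⟩ : Set.range MonoidHom.ker))
    fun N M h => Subtype.ext (Subtype.ext (congrArg Subtype.val h :))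

variable (G) in
def boundedIndexCore (n : ℕ) : Subgroup G :=
  ⨅ N : {N : FinNormal G // N.1.index ≤ n}, N.1.1

lemma boundedIndexCore_le {n : ℕ} (N : FinNormal G) (h : N.1.index ≤ n) :
    boundedIndexCore G n ≤ N.1 :=
  iInf_le (fun N : {N : FinNormal G // N.1.index ≤ n} => N.1.1) ⟨N, h⟩

lemma boundedIndexCore_antitone : Antitone (boundedIndexCore G) :=
  fun _ _ hmn => le_iInf fun N => boundedIndexCore_le N.1 (N.2.trans hmn)

instance (n : ℕ) : (boundedIndexCore G n).Normal :=
  Subgroup.normal_iInf_normal fun N => N.1.2.1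

instance [Group.FG G] (n : ℕ) : (boundedIndexCore G n).FiniteIndex :=
  Subgroup.finiteIndex_iInf fun N => N.1.2.2

section Surjective

variable {H : Type v} [Group H] {f : G →* H} (hf : Surjective f) {n : ℕ}
include hf

lemma boundedIndexCore_le_comap : boundedIndexCore G n ≤ (boundedIndexCore H n).comap f := by
  intro x hx
  simp only [Subgroup.mem_comap, boundedIndexCore, Subgroup.mem_iInf]
  intro N
  have hindex := Subgroup.index_comap_of_surjective N.1.1 hf
  have hfi : (N.1.1.comap f).FiniteIndex := by
    rw [Subgroup.finiteIndex_iff, hindex]; exact N.1.2.2.index_ne_zero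
  exact boundedIndexCore_le ⟨N.1.1.comap f, N.1.2.1.comap f, hfi⟩ (hindex ▸ N.2) hx

lemma comap_boundedIndexCore_le (hker : f.ker ≤ boundedIndexCore G n) :
    (boundedIndexCore H n).comap f ≤ boundedIndexCore G n := by
  refine le_iInf fun N => ?_
  have hkerN : f.ker ≤ N.1.1 := hker.trans (boundedIndexCore_le N.1 N.2)
  have hindex := Subgroup.index_map_eq N.1.1 hf hkerN
  have hfi : (N.1.1.map f).FiniteIndex := by
    rw [Subgroup.finiteIndex_iff, hindex]; exact N.1.2.2.index_ne_zero
  have hle : boundedIndexCore H n ≤ N.1.1.map f :=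
    boundedIndexCore_le ⟨N.1.1.map f, N.1.2.1.map f hf, hfi⟩ (hindex ▸ N.2)
  calc (boundedIndexCore H n).comap f ≤ (N.1.1.map f).comap f := Subgroup.comap_mono hle
    _ = N.1.1 := by rw [Subgroup.comap_map_eq, sup_eq_left.mpr hkerN]

lemma boundedIndexCore_le_ker (hH : boundedIndexCore H n = ⊥) : boundedIndexCore G n ≤ f.ker :=
  (boundedIndexCore_le_comap hf).trans (by rw [hH, MonoidHom.comap_bot])

end Surjective

lemma boundedIndexCore_quotient_eq_bot (n : ℕ) :
    boundedIndexCore (G ⧸ boundedIndexCore G n) n = ⊥ := by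
  have hmk := QuotientGroup.mk'_surjective (boundedIndexCore G n)
  refine (Subgroup.map_comap_eq_self_of_surjective hmk _).symm.trans ?_
  rw [eq_bot_iff, Subgroup.map_le_iff_le_comap, MonoidHom.comap_bot, QuotientGroup.ker_mk']
  exact comap_boundedIndexCore_le hmk (QuotientGroup.ker_mk' _).le

lemma card_le_card_quotient_boundedIndexCore [Group.FG G] {H : Type v} [Group H] {n : ℕ}
    {f : G →* H} (hf : Surjective f) (hH : boundedIndexCore H n = ⊥) :
    Nat.card H ≤ Nat.card (G ⧸ boundedIndexCore G n) :=
  Nat.card_le_card_of_surjective _ <|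
    QuotientGroup.lift_surjective_of_surjective _ f hf (boundedIndexCore_le_ker hf hH)

section Levels

open CategoryTheory

variable {G₁ : Type u} {G₂ : Type v} [Group G₁] [Group G₂]

def IsLevelCompatible (φ : ∀ n, G₁ ⧸ boundedIndexCore G₁ n → G₂ ⧸ boundedIndexCore G₂ n) : Prop :=
  ∀ ⦃m n⦄ (h : m ≤ n) (x : G₁ ⧸ boundedIndexCore G₁ n),
    φ m (quotientProj (boundedIndexCore_antitone h) x) =
      quotientProj (boundedIndexCore_antitone h) (φ n x)

lemma IsLevelCompatible.apply_quotientProj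
    {φ : ∀ n, G₁ ⧸ boundedIndexCore G₁ n → G₂ ⧸ boundedIndexCore G₂ n} (hφ : IsLevelCompatible φ)
    {m n : ℕ} (h : m ≤ n) (x : G₁ ⧸ boundedIndexCore G₁ n) :
    φ m (quotientProj (boundedIndexCore_antitone h) x) =
      quotientProj (boundedIndexCore_antitone h) (φ n x) :=
  hφ h x

variable (G₁ G₂) in
def surjectionSystem : ℕᵒᵖ ⥤ Type (max u v) where
  obj n := {f : G₁ →* G₂ ⧸ boundedIndexCore G₂ n.unop // Surjective f}
  map h := TypeCat.ofHom fun f =>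
    ⟨(quotientProj (boundedIndexCore_antitone (leOfHom h.unop))).comp f.1,
      (quotientProj_surjective (boundedIndexCore_antitone (leOfHom h.unop))).comp f.2⟩
  map_id _ := by
    ext f g
    exact quotientProj_refl _
  map_comp _ _ := by
    ext f g
    simp

lemma exists_compatible_surjections [Group.FG G₁] [Group.FG G₂]
    (hsurj : ∀ n, ∃ f : G₁ →* G₂ ⧸ boundedIndexCore G₂ n, Surjective f) :
    ∃ f : ∀ n, G₁ →* G₂ ⧸ boundedIndexCore G₂ n, (∀ n, Surjective (f n)) ∧
      ∀ ⦃m n⦄ (h : m ≤ n) (g : G₁),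
        quotientProj (boundedIndexCore_antitone h) (f n g) = f m g := by
  have (n : ℕᵒᵖ) : Finite ((surjectionSystem G₁ G₂).obj n) :=
    inferInstanceAs (Finite {f : G₁ →* G₂ ⧸ boundedIndexCore G₂ n.unop // Surjective f})
  have (n : ℕᵒᵖ) : Nonempty ((surjectionSystem G₁ G₂).obj n) := by
    obtain ⟨f, hf⟩ := hsurj n.unop
    exact ⟨⟨f, hf⟩⟩
  obtain ⟨s, hs⟩ := nonempty_sections_of_finite_inverse_system (surjectionSystem G₁ G₂)
  refine ⟨fun n => (s (.op n)).1, fun n => (s (.op n)).2, fun m n h g => ?_⟩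
  have := hs (homOfLE h).op
  exact DFunLike.congr_fun (congrArg Subtype.val this) g

lemma exists_compatible_levelEquiv [Group.FG G₁] [Group.FG G₂]
    (hsurj : ∀ n, ∃ f : G₁ →* G₂ ⧸ boundedIndexCore G₂ n, Surjective f)
    (hcard : ∀ n, Nat.card (G₁ ⧸ boundedIndexCore G₁ n) ≤ Nat.card (G₂ ⧸ boundedIndexCore G₂ n)) :
    ∃ e : ∀ n, G₁ ⧸ boundedIndexCore G₁ n ≃* G₂ ⧸ boundedIndexCore G₂ n,
      IsLevelCompatible fun n => e n := by
  obtain ⟨f, hf, hcompat⟩ := exists_compatible_surjections hsurj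
  have hker (n : ℕ) : boundedIndexCore G₁ n ≤ (f n).ker :=
    boundedIndexCore_le_ker (hf n) (boundedIndexCore_quotient_eq_bot n)
  have hbij (n : ℕ) : Bijective (QuotientGroup.lift _ (f n) (hker n)) := by
    have hs := QuotientGroup.lift_surjective_of_surjective _ _ (hf n) (hker n)
    exact (Nat.bijective_iff_surjective_and_card _).mpr
      ⟨hs, (hcard n).antisymm (Nat.card_le_card_of_surjective _ hs)⟩
  refine ⟨fun n => MulEquiv.ofBijective _ (hbij n), fun m n h x => ?_⟩
  induction x using QuotientGroup.induction_on with
  | H g => exact (hcompat h g).symm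

lemma IsLevelCompatible.symm
    {e : ∀ n, G₁ ⧸ boundedIndexCore G₁ n ≃* G₂ ⧸ boundedIndexCore G₂ n}
    (he : IsLevelCompatible fun n => e n) : IsLevelCompatible fun n => (e n).symm := by
  intro m n h y
  rw [MulEquiv.symm_apply_eq, he.apply_quotientProj h, MulEquiv.apply_symm_apply]

end Levels

namespace ProfiniteCompletion

variable [Group.FG G]

variable (G) in
def levelFinNormal (n : ℕ) : FinNormal G :=
  ⟨boundedIndexCore G n, inferInstance, inferInstance⟩

def level (n : ℕ) : ProfiniteCompletion G →* G ⧸ boundedIndexCore G n :=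
  (Pi.evalMonoidHom (fun N : FinNormal G => G ⧸ N.1) (levelFinNormal G n)).comp
    (profiniteCompletionSubgroup G).subtype

lemma apply_eq_quotientProj_level (x : ProfiniteCompletion G) (M : FinNormal G) {n : ℕ}
    (h : boundedIndexCore G n ≤ M.1) : x.1 M = quotientProj h (level n x) :=
  (x.2 (levelFinNormal G n) M h).symm

lemma quotientProj_level (x : ProfiniteCompletion G) {m n : ℕ} (h : m ≤ n) :
    quotientProj (boundedIndexCore_antitone h) (level n x) = level m x :=
  (apply_eq_quotientProj_level x (levelFinNormal G m) _).symm

lemma ext_level {x y : ProfiniteCompletion G} (h : ∀ n, level n x = level n y) : x = y := by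
  refine Subtype.ext (funext fun M => ?_)
  have hM := boundedIndexCore_le M le_rfl
  rw [apply_eq_quotientProj_level x M hM, apply_eq_quotientProj_level y M hM, h]

section Map

variable {H : Type v} [Group H]
  (φ : ∀ n, G ⧸ boundedIndexCore G n →* H ⧸ boundedIndexCore H n)
  (hφ : IsLevelCompatible fun n => φ n)

noncomputable def mapCoordinates : ProfiniteCompletion G →* ∀ M : FinNormal H, H ⧸ M.1 :=
  MonoidHom.pi fun M =>
    (quotientProj (boundedIndexCore_le M le_rfl)).comp ((φ M.1.index).comp (level M.1.index))

include hφ in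
lemma mapCoordinates_apply (x : ProfiniteCompletion G) (M : FinNormal H) {n : ℕ}
    (hn : M.1.index ≤ n) :
    mapCoordinates φ x M =
      quotientProj ((boundedIndexCore_antitone hn).trans (boundedIndexCore_le M le_rfl))
        (φ n (level n x)) := by
  simp only [mapCoordinates, MonoidHom.pi_apply, MonoidHom.comp_apply,
    ← quotientProj_level x hn, hφ.apply_quotientProj hn, quotientProj_quotientProj]

include hφ in
lemma mapCoordinates_mem (x : ProfiniteCompletion G) :
    mapCoordinates φ x ∈ profiniteCompletionSubgroup H := by
  intro N M h
  have hN := le_max_left N.1.index M.1.index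
  have hM := le_max_right N.1.index M.1.index
  change quotientProj h _ = _
  rw [mapCoordinates_apply φ hφ x N hN, mapCoordinates_apply φ hφ x M hM,
    quotientProj_quotientProj]

noncomputable def map : ProfiniteCompletion G →* ProfiniteCompletion H :=
  (mapCoordinates φ).codRestrict _ (mapCoordinates_mem φ hφ)

lemma level_map [Group.FG H] (x : ProfiniteCompletion G) (n : ℕ) :
    level n (map φ hφ x) = φ n (level n x) := by
  have hn := le_max_right (levelFinNormal H n).1.index n
  change mapCoordinates φ x (levelFinNormal H n) = _
  rw [mapCoordinates_apply φ hφ x _ (le_max_left _ n), ← quotientProj_level x hn,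
    hφ.apply_quotientProj hn]
  rfl

lemma continuous_map : Continuous (map φ hφ) :=
  continuous_induced_rng.mpr <| continuous_pi fun M =>
    (continuous_of_discreteTopology (α := G ⧸ (levelFinNormal G M.1.index).1)
      (f := fun z => quotientProj (boundedIndexCore_le M le_rfl) (φ M.1.index z))).comp
      ((continuous_apply (levelFinNormal G M.1.index)).comp continuous_subtype_val)

end Map

noncomputable def congr {H : Type v} [Group H] [Group.FG H]
    (e : ∀ n, G ⧸ boundedIndexCore G n ≃* H ⧸ boundedIndexCore H n)
    (he : IsLevelCompatible fun n => e n) :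
    ProfiniteCompletion G ≃ₜ* ProfiniteCompletion H where
  toMulEquiv := MonoidHom.toMulEquiv
    (map (fun n => (e n).toMonoidHom) he)
    (map (fun n => (e n).symm.toMonoidHom) he.symm)
    (MonoidHom.ext fun x => ext_level fun n => by simp [level_map])
    (MonoidHom.ext fun y => ext_level fun n => by simp [level_map])
  continuous_toFun := continuous_map _ _
  continuous_invFun := continuous_map _ _

end ProfiniteCompletion

/-- Finitely generated groups with the same finite quotients have
isomorphic (as topological groups) profinite completions. -/
theorem profiniteCompletion_isomorphic_of_same_finite_quotients
    (G₁ G₂ : Type u) [Group G₁] [Group G₂]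
    (hfg₁ : Group.FG G₁) (hfg₂ : Group.FG G₂)
    (hsame : ∀ (Q : Type u) [Group Q] [Finite Q],
      (∃ f : G₁ →* Q, Function.Surjective f) ↔ (∃ f : G₂ →* Q, Function.Surjective f)) :
    ∃ e : ProfiniteCompletion G₁ ≃* ProfiniteCompletion G₂,
      Continuous e ∧ Continuous e.symm := by
  have hsurj (n : ℕ) : ∃ f : G₁ →* G₂ ⧸ boundedIndexCore G₂ n, Surjective f :=
    (hsame _).mpr ⟨QuotientGroup.mk' _, QuotientGroup.mk'_surjective _⟩
  have hcard (n : ℕ) :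
      Nat.card (G₁ ⧸ boundedIndexCore G₁ n) ≤ Nat.card (G₂ ⧸ boundedIndexCore G₂ n) := by
    obtain ⟨f, hf⟩ := (hsame (G₁ ⧸ boundedIndexCore G₁ n)).mp
      ⟨QuotientGroup.mk' _, QuotientGroup.mk'_surjective _⟩
    exact card_le_card_quotient_boundedIndexCore hf (boundedIndexCore_quotient_eq_bot n)
  obtain ⟨e, he⟩ := exists_compatible_levelEquiv hsurj hcard
  let E := ProfiniteCompletion.congr e he
  exact ⟨E.toMulEquiv, E.continuous_toFun, E.continuous_invFun⟩

end ProfinitePaper
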